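/- In the variable widget (components P_{x_i}, P_{x̄_i} sharing a 2-ring) used in the BAP_r reduction, with a total token budget of n for n variable widgets, every deadlock-free token assignment must assign at least one token to P_{x_i} or P_{x̄_i} for each i, and hence exactly one token per widget pair. -/

import Mathlib

/-! Formal framework: communication graphs and the red/yellow/green colouring game
(Brodsky–Pedersen–Wagner, "On the Complexity of Buffer Allocation in Message Passing Systems"),
with receive-side token pools. -/

inductive Colour : Type
  | red | yellow | green
deriving DecidableEq

/-- A communication graph: vertices are partitioned into start/send/receive/end vertices,
`pred u v` means `u` is the component predecessor of `v` (a process arc `u → v`),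
`matched u v` is a communication arc from send `u` to its matching receive `v`,
`comp v` is the index of the process component of `v`, and `pos v` is the position
of `v` within its component chain. -/
structure CommGraph (V : Type) where
  isStart : V → Prop
  isSend : V → Prop
  isRecv : V → Prop
  isEnd : V → Prop
  pred : V → V → Prop
  matched : V → V → Prop
  comp : V → ℕ
  pos : V → ℕ

namespace CommGraph

variable {V : Type}

/-- An arc of the communication graph (process arc or communication arc). -/
def GArc (G : CommGraph V) (u v : V) : Prop := G.pred u v ∨ G.matched u v

/-- Well-formedness of a communication graph: the vertex kinds partition `V`,
components are chains (unique predecessors, positions increase along process arcs),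
communication arcs go from sends to receives in different components and form a
partial matching, and the graph is acyclic (arcs admit no infinite descent). -/
structure WF (G : CommGraph V) : Prop where
  kinds : ∀ v, G.isStart v ∨ G.isSend v ∨ G.isRecv v ∨ G.isEnd v
  start_not_send : ∀ v, G.isStart v → ¬ G.isSend v
  start_not_recv : ∀ v, G.isStart v → ¬ G.isRecv v
  start_not_end : ∀ v, G.isStart v → ¬ G.isEnd v
  send_not_recv : ∀ v, G.isSend v → ¬ G.isRecv v
  send_not_end : ∀ v, G.isSend v → ¬ G.isEnd v
  recv_not_end : ∀ v, G.isRecv v → ¬ G.isEnd v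
  pred_unique : ∀ {u u' v}, G.pred u v → G.pred u' v → u = u'
  pred_comp : ∀ {u v}, G.pred u v → G.comp u = G.comp v
  pred_pos : ∀ {u v}, G.pred u v → G.pos v = G.pos u + 1
  start_no_pred : ∀ {u v}, G.pred u v → ¬ G.isStart v
  has_pred : ∀ v, ¬ G.isStart v → ∃ u, G.pred u v
  matched_send : ∀ {u v}, G.matched u v → G.isSend u
  matched_recv : ∀ {u v}, G.matched u v → G.isRecv v
  matched_comp : ∀ {u v}, G.matched u v → G.comp u ≠ G.comp v
  matched_unique_left : ∀ {u u' v}, G.matched u v → G.matched u' v → u = u'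
  matched_unique_right : ∀ {u v v'}, G.matched u v → G.matched u v' → v = v'
  send_has_match : ∀ v, G.isSend v → ∃ w, G.matched v w
  recv_has_match : ∀ v, G.isRecv v → ∃ w, G.matched w v
  dag : WellFounded fun u v => G.GArc u v

end CommGraph

/-- A state of the colouring game: the colouring, which receive vertices currently
hold a token on their incident communication arc, and the number of available
tokens in each (per-process, receive-side) pool. -/
structure St (V : Type) where
  col : V → Colour
  tok : V → Bool
  pool : ℕ → ℕ

/-- The names of the colouring rules. -/
inductive Rule : Type
  | sendYel | recvYel | recvYelTok | sendGrn | recvGrn | endYel | endGrn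
deriving DecidableEq

variable {V : Type}

/-- One move of the colouring game (receive-side buffering: the token used by the
buffered-receive rule `recvYelTok` comes from the pool of the receiving component,
and is returned when the receive turns green). -/
inductive Step [DecidableEq V] (G : CommGraph V) : Rule → St V → St V → Prop
  | sendYel {s : St V} {v u : V} :
      G.isSend v → s.col v = .red → G.pred u v → s.col u = .green →
      Step G .sendYel s ⟨Function.update s.col v .yellow, s.tok, s.pool⟩
  | recvYel {s : St V} {v u w : V} :
      G.isRecv v → s.col v = .red → G.matched w v → s.col w = .yellow →
      G.pred u v → s.col u = .green →
      Step G .recvYel s ⟨Function.update s.col v .yellow, s.tok, s.pool⟩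
  | recvYelTok {s : St V} {v w : V} :
      G.isRecv v → s.col v = .red → G.matched w v → s.col w = .yellow →
      0 < s.pool (G.comp v) →
      Step G .recvYelTok s ⟨Function.update s.col v .yellow,
        Function.update s.tok v true,
        Function.update s.pool (G.comp v) (s.pool (G.comp v) - 1)⟩
  | sendGrn {s : St V} {v r : V} :
      G.isSend v → s.col v = .yellow → G.matched v r → s.col r = .yellow →
      Step G .sendGrn s ⟨Function.update s.col v .green, s.tok, s.pool⟩
  | recvGrn {s : St V} {v u w : V} :
      G.isRecv v → s.col v = .yellow → G.pred u v → s.col u = .green →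
      G.matched w v → s.col w = .green →
      Step G .recvGrn s ⟨Function.update s.col v .green,
        Function.update s.tok v false,
        if s.tok v then
          Function.update s.pool (G.comp v) (s.pool (G.comp v) + 1)
        else s.pool⟩
  | endYel {s : St V} {v u : V} :
      G.isEnd v → s.col v = .red → G.pred u v → s.col u = .green →
      Step G .endYel s ⟨Function.update s.col v .yellow, s.tok, s.pool⟩
  | endGrn {s : St V} {v : V} :
      G.isEnd v → s.col v = .yellow →
      Step G .endGrn s ⟨Function.update s.col v .green, s.tok, s.pool⟩

/-- `IsSeq G s l` : the list `l` of (rule, state) pairs is a valid colouring sequence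
starting from state `s`. -/
def IsSeq [DecidableEq V] (G : CommGraph V) : St V → List (Rule × St V) → Prop
  | _, [] => True
  | s, p :: l => Step G p.1 s p.2 ∧ IsSeq G p.2 l

/-- The list of states visited by a colouring sequence. -/
def states (s0 : St V) (l : List (Rule × St V)) : List (St V) :=
  s0 :: l.map Prod.snd

/-- The final state of a colouring sequence. -/
def finalSt (s0 : St V) (l : List (Rule × St V)) : St V :=
  (states s0 l).getLast (by simp [states])

open Classical in
/-- The initial state: start vertices green, all others red, no tokens placed,
token pools given by the token assignment `B` (pool of component `i` holds `B i`). -/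
noncomputable def init (G : CommGraph V) (B : ℕ → ℕ) : St V :=
  ⟨fun v => if G.isStart v then Colour.green else Colour.red, fun _ => false, B⟩

/-- A state from which no colouring rule applies. -/
def MaximalFrom [DecidableEq V] (G : CommGraph V) (s : St V) : Prop :=
  ∀ ρ t, ¬ Step G ρ s t

/-- A state is complete when every vertex is green. -/
def Completes (s : St V) : Prop := ∀ v, s.col v = Colour.green

/-- A deadlocking colouring sequence from `s0`: a maximal sequence whose final
colouring has a non-green vertex. -/
def Deadlocks [DecidableEq V] (G : CommGraph V) (s0 : St V) (l : List (Rule × St V)) : Prop :=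
  IsSeq G s0 l ∧ MaximalFrom G (finalSt s0 l) ∧ ¬ Completes (finalSt s0 l)

/-- The system is safe (deadlock free) under token assignment `B`:
every maximal colouring sequence completes. -/
def DeadlockFree [DecidableEq V] (G : CommGraph V) (B : ℕ → ℕ) : Prop :=
  ∀ l, IsSeq G (init G B) l → MaximalFrom G (finalSt (init G B) l) →
    Completes (finalSt (init G B) l)

/-- A state blocks: some yellow send has a matching red receive to which the
buffered-receive rule cannot be applied (no token available). -/
def Blocked (G : CommGraph V) (s : St V) : Prop :=
  ∃ v r, G.matched v r ∧ s.col v = Colour.yellow ∧ s.col r = Colour.red ∧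
    s.pool (G.comp r) = 0

/-- The graph is block free under token assignment `B`: no colouring sequence blocks. -/
def BlockFree [DecidableEq V] (G : CommGraph V) (B : ℕ → ℕ) : Prop :=
  ∀ l, IsSeq G (init G B) l → ¬ Blocked G (finalSt (init G B) l)

/-! If neither component of a widget holds a token, its 2-ring never gets going: a send turns
green only once its matched receive is yellow, and a receive leaves red only once its
predecessor is green or its own component's pool is non-empty. So "both sends are not green,
everything after them is red, and the two components hold no token" is invariant under every
move. Every move lowers the total colour deficit, so a maximal colouring sequence exists; it
ends with the receives of the widget red, a deadlock. Hence each widget needs a token, and a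
budget of `n` tokens for `n` widgets leaves exactly one for each. -/

open Relation Finset

theorem Finset.eq_one_of_one_le_of_sum_le_card {ι : Type*} {s : Finset ι} {f : ι → ℕ}
    (hf : ∀ i ∈ s, 1 ≤ f i) (hsum : ∑ i ∈ s, f i ≤ #s) {i : ι} (hi : i ∈ s) :
    f i = 1 := by
  have hsum_eq : ∑ i ∈ s, 1 = ∑ i ∈ s, f i :=
    le_antisymm (sum_le_sum hf) (by simpa using hsum)
  exact ((sum_eq_sum_iff_of_le hf).1 hsum_eq i hi).symm

namespace CommGraph.WF

variable {G : CommGraph V} {a u v : V}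

theorem comp_eq_of_transGen (hwf : G.WF) (h : TransGen G.pred a v) : G.comp v = G.comp a := by
  induction h with
  | single h => exact (hwf.pred_comp h).symm
  | tail _ h ih => exact (hwf.pred_comp h).symm.trans ih

theorem reflTransGen_of_transGen_of_pred (hwf : G.WF) (h : TransGen G.pred a v)
    (hu : G.pred u v) : ReflTransGen G.pred a u := by
  obtain ⟨w, haw, hwv⟩ := TransGen.tail'_iff.1 h
  exact hwf.pred_unique hu hwv ▸ haw

theorem not_isStart_of_transGen (hwf : G.WF) (h : TransGen G.pred a v) : ¬ G.isStart v := by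
  obtain ⟨w, -, hwv⟩ := TransGen.tail'_iff.1 h
  exact hwf.start_no_pred hwv

end CommGraph.WF

def TokenFree (G : CommGraph V) (c : ℕ) (s : St V) : Prop :=
  s.pool c = 0 ∧ ∀ v, G.comp v = c → s.tok v = false

namespace Step

variable [DecidableEq V] {G : CommGraph V} {ρ : Rule} {s t : St V} {v : V}

theorem col_of_red (h : Step G ρ s t) (hv : s.col v = .red) (ht : t.col v ≠ .red) :
    (∃ u, G.pred u v ∧ s.col u = .green) ∨ 0 < s.pool (G.comp v) := by
  cases h <;> simp only [Function.update_apply] at ht <;> split_ifs at ht <;> aesop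

theorem send_green (hwf : G.WF) (h : Step G ρ s t) (hv : G.isSend v) (hs : s.col v ≠ .green)
    (ht : t.col v = .green) : ∃ r, G.matched v r ∧ s.col r = .yellow := by
  cases h <;> simp only [Function.update_apply] at ht <;> split_ifs at ht <;> subst_vars
  all_goals first
    | exact absurd ht hs
    | exact ⟨_, ‹_›, ‹_›⟩
    | exact absurd ‹G.isRecv _› (hwf.send_not_recv _ hv)
    | exact absurd ‹G.isEnd _› (hwf.send_not_end _ hv)

theorem tokenFree {c : ℕ} (h : Step G ρ s t) (hs : TokenFree G c s) : TokenFree G c t := by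
  obtain ⟨hpool, htok⟩ := hs
  cases h with
  | @recvYelTok _ w _ _ _ _ _ hpos =>
    have hw : G.comp w ≠ c := by rintro rfl; omega
    refine ⟨by simp [Function.update_of_ne hw.symm, hpool], fun v hv => ?_⟩
    have hvw : v ≠ w := by rintro rfl; exact hw hv
    simp [Function.update_of_ne hvw, htok v hv]
  | @recvGrn _ w =>
    refine ⟨?_, fun v hv => ?_⟩
    · split_ifs with hw
      · have hwc : G.comp w ≠ c := by rintro rfl; simp [htok w rfl] at hw
        simp [Function.update_of_ne hwc.symm, hpool]
      · exact hpool
    · simp [Function.update_apply, htok v hv]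
  | _ => exact ⟨hpool, htok⟩

end Step

theorem finalSt_cons (s₀ t : St V) (ρ : Rule) (l : List (Rule × St V)) :
    finalSt s₀ ((ρ, t) :: l) = finalSt t l := by
  simp [finalSt, states, List.getLast_cons]

def Colour.deficit : Colour → ℕ
  | .red => 2
  | .yellow => 1
  | .green => 0

def St.deficit [Fintype V] (s : St V) : ℕ := ∑ v, (s.col v).deficit

theorem Step.deficit_lt [DecidableEq V] [Fintype V] {G : CommGraph V} {ρ : Rule} {s t : St V}
    (h : Step G ρ s t) : t.deficit < s.deficit := by
  obtain ⟨w, c, hcol, hlt⟩ : ∃ w c, t.col = Function.update s.col w c ∧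
      c.deficit < (s.col w).deficit := by
    cases h <;> exact ⟨_, _, rfl, by simp only [*]; decide⟩
  refine sum_lt_sum (fun v _ => ?_) ⟨w, mem_univ w, by simpa [hcol] using hlt⟩
  rcases eq_or_ne v w with rfl | hvw
  · simpa [hcol] using hlt.le
  · simp [hcol, Function.update_of_ne hvw]

theorem exists_isSeq_maximalFrom [DecidableEq V] [Fintype V] (G : CommGraph V) (s : St V) :
    ∃ l, IsSeq G s l ∧ MaximalFrom G (finalSt s l) := by
  by_cases hmax : MaximalFrom G s
  · exact ⟨[], trivial, hmax⟩
  · obtain ⟨ρ, t, hst⟩ : ∃ ρ t, Step G ρ s t := by simpa [MaximalFrom] using hmax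
    obtain ⟨l, hl, hlmax⟩ := exists_isSeq_maximalFrom G t
    exact ⟨(ρ, t) :: l, ⟨hst, hl⟩, by rwa [finalSt_cons]⟩
termination_by s.deficit
decreasing_by exact hst.deficit_lt

theorem IsSeq.finalSt_induction [DecidableEq V] {G : CommGraph V} (P : St V → Prop)
    (hstep : ∀ ρ s t, P s → Step G ρ s t → P t) :
    ∀ {s : St V} {l : List (Rule × St V)}, IsSeq G s l → P s → P (finalSt s l)
  | _, [], _, hs => hs
  | _, (ρ, t) :: l, ⟨hst, hl⟩, hs => by
    rw [finalSt_cons]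
    exact hl.finalSt_induction P hstep (hstep ρ _ t hs hst)

/-- A `t`-ring is the case `ι = ZMod t`, `σ = (· + 1)`; the variable widget is `ι = Bool`,
`σ = not`. -/
structure IsRing (G : CommGraph V) {ι : Type*} (a b : ι → V) (σ : ι → ι) : Prop where
  precedes : ∀ k, TransGen G.pred (a k) (b k)
  matched : ∀ k, G.matched (a k) (b (σ k))

structure IsRing.Starved (G : CommGraph V) {ι : Type*} (a : ι → V) (s : St V) : Prop where
  tokenFree : ∀ k, TokenFree G (G.comp (a k)) s
  red_of_transGen : ∀ k v, TransGen G.pred (a k) v → s.col v = .red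
  send_ne_green : ∀ k, s.col (a k) ≠ .green

namespace IsRing

variable {G : CommGraph V} {ι : Type*} {a b : ι → V} {σ : ι → ι}

theorem starved_init (hwf : G.WF) (hR : IsRing G a b σ) {B : ℕ → ℕ}
    (hB : ∀ k, B (G.comp (a k)) = 0) : Starved G a (init G B) where
  tokenFree k := ⟨hB k, fun _ _ => rfl⟩
  red_of_transGen k v hv := by simp [init, hwf.not_isStart_of_transGen hv]
  send_ne_green k := by
    have hk : ¬ G.isStart (a k) := fun h =>
      hwf.start_not_send _ h (hwf.matched_send (hR.matched k))
    simp [init, hk]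

theorem starved_step [DecidableEq V] (hwf : G.WF) (hR : IsRing G a b σ) {ρ : Rule} {s t : St V}
    (hs : Starved G a s) (hst : Step G ρ s t) : Starved G a t where
  tokenFree k := hst.tokenFree (hs.tokenFree k)
  red_of_transGen k v hv := by
    by_contra hne
    rcases hst.col_of_red (hs.red_of_transGen k v hv) hne with ⟨u, hu, hug⟩ | hpos
    · rcases reflTransGen_iff_eq_or_transGen.1 (hwf.reflTransGen_of_transGen_of_pred hv hu)
        with rfl | hu'
      · exact hs.send_ne_green k hug
      · simp [hs.red_of_transGen k u hu'] at hug
    · rw [hwf.comp_eq_of_transGen hv, (hs.tokenFree k).1] at hpos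
      exact hpos.false
  send_ne_green k hg := by
    obtain ⟨r, hr, hry⟩ :=
      hst.send_green hwf (hwf.matched_send (hR.matched k)) (hs.send_ne_green k) hg
    rw [hwf.matched_unique_right hr (hR.matched k),
      hs.red_of_transGen _ _ (hR.precedes _)] at hry
    exact Colour.noConfusion hry

theorem not_deadlockFree [DecidableEq V] [Fintype V] [Nonempty ι] (hwf : G.WF)
    (hR : IsRing G a b σ) {B : ℕ → ℕ} (hB : ∀ k, B (G.comp (a k)) = 0) :
    ¬ DeadlockFree G B := by
  intro hsafe
  obtain ⟨l, hl, hmax⟩ := exists_isSeq_maximalFrom G (init G B)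
  obtain ⟨k⟩ := ‹Nonempty ι›
  have hred := (hl.finalSt_induction _ (fun _ _ _ => hR.starved_step hwf)
    (hR.starved_init hwf hB)).red_of_transGen k (b k) (hR.precedes k)
  simp [hsafe l hl hmax (b k)] at hred

end IsRing

theorem variable_widget_token_forced_general {V : Type} [DecidableEq V] [Fintype V]
    (G : CommGraph V) (hwf : G.WF) (n : ℕ) (B : ℕ → ℕ)
    (p q : ℕ → ℕ) (s r s' r' : ℕ → V)
    (hring : ∀ i < n,
      G.isSend (s i) ∧ G.isRecv (r i) ∧ G.comp (s i) = p i ∧ G.comp (r i) = p i ∧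
      Relation.TransGen G.pred (s i) (r i) ∧
      G.isSend (s' i) ∧ G.isRecv (r' i) ∧ G.comp (s' i) = q i ∧ G.comp (r' i) = q i ∧
      Relation.TransGen G.pred (s' i) (r' i) ∧
      G.matched (s i) (r' i) ∧ G.matched (s' i) (r i))
    (hbudget : (∑ i ∈ Finset.range n, (B (p i) + B (q i))) ≤ n)
    (hsafe : DeadlockFree G B) :
    (∀ i < n, 1 ≤ B (p i) + B (q i)) ∧ (∀ i < n, B (p i) + B (q i) = 1) := by
  have hforced : ∀ i < n, 1 ≤ B (p i) + B (q i) := by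
    intro i hi
    obtain ⟨-, -, hsp, -, hsr, -, -, hsq, -, hsr', hm, hm'⟩ := hring i hi
    by_contra! hempty
    have hwidget : IsRing G (fun k => bif k then s i else s' i)
        (fun k => bif k then r i else r' i) not :=
      ⟨Bool.forall_bool.2 ⟨hsr', hsr⟩, Bool.forall_bool.2 ⟨hm', hm⟩⟩
    refine hwidget.not_deadlockFree hwf (Bool.forall_bool.2 ⟨?_, ?_⟩) hsafe <;>
      simp only [cond_false, cond_true, hsp, hsq] <;> omega
  exact ⟨hforced, fun i hi =>
    eq_one_of_one_le_of_sum_le_card (f := fun j => B (p j) + B (q j))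
    (fun j hj => hforced j (mem_range.1 hj)) (by simpa using hbudget) (mem_range.2 hi)⟩

/-- **Variable-widget property of the BAP_r reduction.** Suppose `G` contains, for
each `i < n`, a 2-ring between the two components `p i` and `q i` (send `s i`
before receive `r i` in component `p i`, send `s' i` before receive `r' i` in
component `q i`, cross-matched), with all `2n` components pairwise distinct, and
the total token budget over the `n` widget pairs is at most `n`. Then every
deadlock-free token assignment gives at least one token to `p i` or `q i` for each
`i`, hence exactly one token per widget pair. -/
theorem variable_widget_token_forced {V : Type} [DecidableEq V] [Fintype V]
    (G : CommGraph V) (hwf : G.WF) (n : ℕ) (B : ℕ → ℕ)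
    (p q : ℕ → ℕ) (s r s' r' : ℕ → V)
    (hring : ∀ i < n,
      G.isSend (s i) ∧ G.isRecv (r i) ∧ G.comp (s i) = p i ∧ G.comp (r i) = p i ∧
      Relation.TransGen G.pred (s i) (r i) ∧
      G.isSend (s' i) ∧ G.isRecv (r' i) ∧ G.comp (s' i) = q i ∧ G.comp (r' i) = q i ∧
      Relation.TransGen G.pred (s' i) (r' i) ∧
      G.matched (s i) (r' i) ∧ G.matched (s' i) (r i))
    (hne : ∀ i < n, p i ≠ q i)
    (hdisj : ∀ i < n, ∀ j < n, i ≠ j →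
      p i ≠ p j ∧ p i ≠ q j ∧ q i ≠ p j ∧ q i ≠ q j)
    (hbudget : (∑ i ∈ Finset.range n, (B (p i) + B (q i))) ≤ n)
    (hsafe : DeadlockFree G B) :
    (∀ i < n, 1 ≤ B (p i) + B (q i)) ∧ (∀ i < n, B (p i) + B (q i) = 1) :=
  variable_widget_token_forced_general G hwf n B p q s r s' r' hring hbudget hsafe
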